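/- Let k ≥ 3 be an integer, let v_1 ≥ v_2 ≥ … ≥ v_n > 0, and let B be an integer with 0 ≤ B ≤ n, and set p*_j = m_{v_j}^{-1}(x*) for j ∈ [n]. Then there exists a probability measure μ on {0,1}^n such that: (i) μ-almost surely Σ_{j=1}^n A_j = B; (ii) for each j ∈ [n], μ{A : A_j = 1} = p*_j; and (iii) independent play of μ by all k players is a Nash equilibrium of the Boolean-valued Colonel Blotto game, i.e., for every probability measure ν on {0,1}^n that almost surely satisfies Σ_{j=1}^n A_j ≤ B, the expected Boolean Blotto payoff of a single player drawing her bid vector from ν while the other k−1 players draw independently from μ is at most the expected payoff she receives by drawing from μ. -/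

import Mathlib

open MeasureTheory

/-- Marginal utility `m_v(p)` of competing in a battlefield of value `v` in the
`k`-player Boolean General Lotto game, when each of the other `k−1` players
independently competes with probability `p`. -/
noncomputable def mMarg (k : ℕ) (v p : ℝ) : ℝ :=
  if p = 0 then ((k : ℝ) - 1) * v / k else (v / k) * ((1 - (1 - p) ^ (k - 1)) / p)

/-- Boolean Colonel Blotto payoff: each battlefield's value is split evenly
among the players who bid the most (`false < true`) on it. -/
noncomputable def boolBlottoPayoff {k n : ℕ} (v : Fin n → ℝ) (A : Fin k → Fin n → Bool)
    (i : Fin k) : ℝ :=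
  ∑ j, if ∀ i', A i' j ≤ A i j then
      v j / ((Finset.univ.filter fun i' : Fin k => ∀ i'', A i'' j ≤ A i' j).card : ℝ)
    else 0

/-- The strategy profile where player `i₀` plays `ν` and everyone else plays `μ`. -/
noncomputable def devFamily {α : Type*} [MeasurableSpace α] {k : ℕ} (i₀ : Fin k)
    (μ ν : Measure α) : Fin k → Measure α :=
  fun i => if i = i₀ then ν else μ

theorem devFamily_prob {α : Type*} [MeasurableSpace α] {k : ℕ} (i₀ : Fin k)
    (μ ν : Measure α) (hμ : IsProbabilityMeasure μ) (hν : IsProbabilityMeasure ν) :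
    ∀ i, IsProbabilityMeasure (devFamily i₀ μ ν i) := by
  intro i
  unfold devFamily
  split <;> assumption

/-- Expected payoff of player `i` when each player `i'` independently samples its
Boolean bid vector from `P i'`. -/
noncomputable def boolExpectedPayoff {k n : ℕ} (v : Fin n → ℝ)
    (P : Fin k → Measure (Fin n → Bool)) (hP : ∀ i, IsProbabilityMeasure (P i))
    (i : Fin k) : ℝ :=
  haveI := hP
  ∫ A, boolBlottoPayoff v A i ∂(Measure.pi P)

/-!
The threshold `x*` is the Lagrange multiplier of the budget constraint. Each `m_{v_j}⁻¹` is
continuous and antitone, so at the infimum `x*` the marginals `p*_j` sum to exactly `B`, and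
`x* ≥ 0`. Systematic sampling realises these marginals with exactly `B` bids: with `c` the partial
sums of `p*` and `u` uniform on `(0, 1]`, bid on battlefield `j` iff some `u + m`, `m ∈ ℤ`, lies in
`(c_j, c_{j+1}]`; the integral of `⌊b - u⌋ - ⌊a - u⌋` over `u ∈ (0, 1]` is `b - a`.

If the other players bid on a battlefield of value `v` independently with probability `p`, a
player who bids there with probability `q` earns `v/k · (1-p)^(k-1) + q · m_v(p)`; the `q` term
comes from `E[1 / (1 + T)] = (1/k) Σ_{i<k} (1-p)^i` for `T ~ Bin(k-1, p)`. So a payoff is affine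
in the deviator's own marginals `q_j`, and `(q - p*_j)(m_{v_j}(p*_j) - x*) ≤ 0` for `q ∈ [0, 1]`,
together with `Σ q_j ≤ B = Σ p*_j` and `x* ≥ 0`, shows that no budget-feasible deviation gains.
-/

namespace BooleanBlotto

open Finset

lemma mMarg_eq_geom_sum (k : ℕ) (v p : ℝ) :
    mMarg k v p = v / k * ∑ i ∈ range (k - 1), (1 - p) ^ i := by
  rcases eq_or_ne p 0 with rfl | hp
  · rcases Nat.eq_zero_or_pos k with rfl | hk
    · simp [mMarg]
    · simp [mMarg, Nat.cast_sub hk]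
      ring
  · rw [mMarg, if_neg hp, geom_sum_eq (by simpa using hp), sub_sub_cancel_left, div_neg,
      ← neg_div, neg_sub]

lemma continuous_mMarg (k : ℕ) (v : ℝ) : Continuous (mMarg k v) := by
  rw [funext (mMarg_eq_geom_sum k v)]
  fun_prop

lemma mMarg_antitoneOn (k : ℕ) {v : ℝ} (hv : 0 ≤ v) :
    AntitoneOn (mMarg k v) (Set.Icc 0 1) := by
  intro p _ q hq hpq
  simp only [mMarg_eq_geom_sum]
  gcongr with i
  exact sub_nonneg.2 hq.2

lemma mMarg_zero (k : ℕ) (v : ℝ) : mMarg k v 0 = (k - 1) * v / k := if_pos rfl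

lemma mMarg_one {k : ℕ} (hk : 2 ≤ k) (v : ℝ) : mMarg k v 1 = v / k := by
  rw [mMarg, if_neg one_ne_zero, sub_self, zero_pow (by omega)]
  simp

lemma mMarg_surjOn {k : ℕ} (hk : 2 ≤ k) (v : ℝ) :
    Set.SurjOn (mMarg k v) (Set.Icc 0 1) (Set.Icc (v / k) ((k - 1) * v / k)) := by
  rw [← mMarg_one hk, ← mMarg_zero]
  exact intermediate_value_Icc' zero_le_one (continuous_mMarg k v).continuousOn

structure IsExtendedInverse (k : ℕ) (v : ℝ) (f : ℝ → ℝ) : Prop where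
  apply_mMarg : ∀ p ∈ Set.Icc (0 : ℝ) 1, f (mMarg k v p) = p
  eq_one : ∀ x, x < v / k → f x = 1
  eq_zero : ∀ x, (k - 1) * v / k < x → f x = 0

namespace IsExtendedInverse

variable {k : ℕ} {v : ℝ} {f : ℝ → ℝ} (hf : IsExtendedInverse k v f) (hk : 2 ≤ k)
include hf hk

lemma mem_Icc_and_mMarg_eq {x : ℝ} (hx : x ∈ Set.Icc (v / k) ((k - 1) * v / k)) :
    f x ∈ Set.Icc 0 1 ∧ mMarg k v (f x) = x := by
  obtain ⟨p, hp, rfl⟩ := mMarg_surjOn hk v hx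
  rw [hf.apply_mMarg p hp]
  exact ⟨hp, rfl⟩

lemma mem_Icc (x : ℝ) : f x ∈ Set.Icc 0 1 := by
  by_cases hlo : x < v / k
  · simp [hf.eq_one x hlo]
  by_cases hhi : (k - 1) * v / k < x
  · simp [hf.eq_zero x hhi]
  exact (hf.mem_Icc_and_mMarg_eq hk ⟨not_lt.1 hlo, not_lt.1 hhi⟩).1

lemma antitone (hv : 0 ≤ v) : Antitone f := by
  intro x y hxy
  by_cases hlo : x < v / k
  · exact hf.eq_one x hlo ▸ (hf.mem_Icc hk y).2
  by_cases hhi : (k - 1) * v / k < y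
  · exact hf.eq_zero y hhi ▸ (hf.mem_Icc hk x).1
  obtain ⟨hx, hmx⟩ := hf.mem_Icc_and_mMarg_eq hk ⟨not_lt.1 hlo, hxy.trans (not_lt.1 hhi)⟩
  obtain ⟨hy, hmy⟩ := hf.mem_Icc_and_mMarg_eq hk ⟨(not_lt.1 hlo).trans hxy, not_lt.1 hhi⟩
  by_contra! hlt
  have := mMarg_antitoneOn k hv hx hy hlt.le
  rw [hmx, hmy] at this
  exact hlt.ne (by rw [le_antisymm hxy this])

lemma continuous (hv : 0 ≤ v) : Continuous f := by
  let g : ℝ → Set.Icc (0 : ℝ) 1 := fun x => ⟨f (-x), hf.mem_Icc hk (-x)⟩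
  have hg : Continuous g := by
    refine Monotone.continuous_of_surjective (fun x y hxy => ?_) fun p => ?_
    · exact hf.antitone hk hv (neg_le_neg hxy)
    · exact ⟨-mMarg k v p, Subtype.ext (by simp [g, hf.apply_mMarg p p.2])⟩
  simpa [g, Function.comp_def] using continuous_subtype_val.comp (hg.comp continuous_neg)

lemma sub_mul_mMarg_sub_nonpos {q : ℝ} (hq : q ∈ Set.Icc 0 1) (x : ℝ) :
    (q - f x) * (mMarg k v (f x) - x) ≤ 0 := by
  by_cases hlo : x < v / k
  · rw [hf.eq_one x hlo, mMarg_one hk]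
    exact mul_nonpos_of_nonpos_of_nonneg (by linarith [hq.2]) (by linarith)
  by_cases hhi : (k - 1) * v / k < x
  · rw [hf.eq_zero x hhi, mMarg_zero]
    exact mul_nonpos_of_nonneg_of_nonpos (by linarith [hq.1]) (by linarith)
  rw [(hf.mem_Icc_and_mMarg_eq hk ⟨not_lt.1 hlo, not_lt.1 hhi⟩).2, sub_self, mul_zero]

end IsExtendedInverse

lemma lt_sInf_sublevel_and_eq {S : ℝ → ℝ} (hS : Continuous S) {a c : ℝ}
    (ha : ∀ x ≤ a, c < S x) (hne : ∃ x, S x ≤ c) :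
    a < sInf {x | S x ≤ c} ∧ S (sInf {x | S x ≤ c}) = c := by
  set T := {x | S x ≤ c}
  have hlt : ∀ x ∈ T, a < x := fun x hx => not_le.1 fun h => (ha x h).not_ge hx
  have hmem : sInf T ∈ T :=
    (isClosed_le hS continuous_const).csInf_mem hne ⟨a, fun x hx => (hlt x hx).le⟩
  refine ⟨hlt _ hmem, le_antisymm hmem ?_⟩
  obtain ⟨y, hy, hSy⟩ := intermediate_value_Icc' (hlt _ hmem).le hS.continuousOn
    ⟨hmem, (ha a le_rfl).le⟩
  have : sInf T ≤ y := csInf_le ⟨a, fun x hx => (hlt x hx).le⟩ hSy.le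
  rw [← le_antisymm hy.2 this, hSy]

section Threshold

variable {k n B : ℕ} {v : Fin n → ℝ} {f : Fin n → ℝ → ℝ}

lemma sInf_nonneg_and_sum_extendedInverse_eq (hk : 2 ≤ k) (hv : ∀ j, 0 < v j)
    (hf : ∀ j, IsExtendedInverse k (v j) (f j)) (hB : B ≤ n) :
    0 ≤ sInf {x | ∑ j, f j x ≤ B} ∧ ∑ j, f j (sInf {x | ∑ j, f j x ≤ B}) = B := by
  have hone : ∀ x ≤ 0, ∑ j, f j x = n := fun x hx => by
    have : ∀ j, f j x = 1 := fun j =>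
      (hf j).eq_one x (hx.trans_lt (div_pos (hv j) (by positivity)))
    simp [this]
  rcases hB.eq_or_lt with rfl | hlt
  · have huniv : {x | ∑ j, f j x ≤ B} = Set.univ := Set.eq_univ_of_forall fun x => by
      simpa using sum_le_card_nsmul univ (f · x) 1 fun j _ => ((hf j).mem_Icc hk x).2
    rw [huniv, Real.sInf_of_not_bddBelow not_bddBelow_univ]
    exact ⟨le_rfl, hone 0 le_rfl⟩
  · obtain ⟨x₀, hx₀⟩ := (Set.finite_range fun j => (k - 1) * v j / k).bddAbove
    have hzero : ∑ j, f j (x₀ + 1) = 0 :=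
      sum_eq_zero fun j _ => (hf j).eq_zero _ (by linarith [hx₀ ⟨j, rfl⟩])
    have := lt_sInf_sublevel_and_eq (S := fun x => ∑ j, f j x) (a := 0) (c := B)
      (continuous_finsetSum _ fun j _ => (hf j).continuous hk (hv j).le)
      (fun x hx => by simpa [hone x hx] using hlt) ⟨x₀ + 1, by simp [hzero]⟩
    exact ⟨this.1.le, this.2⟩

lemma sum_mul_mMarg_le_of_sum_le (hk : 2 ≤ k) (hf : ∀ j, IsExtendedInverse k (v j) (f j))
    {x : ℝ} (hx : 0 ≤ x) (hsum : ∑ j, f j x = B) {q : Fin n → ℝ}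
    (hq : ∀ j, q j ∈ Set.Icc 0 1) (hqB : ∑ j, q j ≤ B) :
    ∑ j, q j * mMarg k (v j) (f j x) ≤ ∑ j, f j x * mMarg k (v j) (f j x) := by
  have hslack : ∑ j, (q j - f j x) * (mMarg k (v j) (f j x) - x) ≤ 0 :=
    sum_nonpos fun j _ => (hf j).sub_mul_mMarg_sub_nonpos hk (hq j) x
  have hbudget : ∑ j, (q j - f j x) * x ≤ 0 := by
    rw [← sum_mul, sum_sub_distrib, hsum]
    exact mul_nonpos_of_nonpos_of_nonneg (by linarith) hx
  rw [← sub_nonpos, ← sum_sub_distrib]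
  calc ∑ j, (q j * mMarg k (v j) (f j x) - f j x * mMarg k (v j) (f j x))
      = ∑ j, (q j - f j x) * (mMarg k (v j) (f j x) - x) + ∑ j, (q j - f j x) * x := by
        rw [← sum_add_distrib]; congr 1; ext j; ring
    _ ≤ 0 := by linarith

end Threshold

section SystematicSampling

lemma floor_sub_floor_eq_ite {a b : ℝ} (hab : a ≤ b) (hba : b ≤ a + 1) :
    ⌊b⌋ - ⌊a⌋ = if ⌊a⌋ < ⌊b⌋ then 1 else 0 := by
  have h₁ := Int.floor_mono hab
  have h₂ : ⌊b⌋ ≤ ⌊a⌋ + 1 := (Int.floor_mono hba).trans_eq (Int.floor_add_one a)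
  split_ifs <;> omega

lemma intervalIntegral_floor_sub_floor (a b : ℝ) :
    ∫ u in (0 : ℝ)..1, ((⌊b - u⌋ : ℝ) - ⌊a - u⌋) = b - a := by
  have hfract (c : ℝ) :
      ∫ u in (0 : ℝ)..1, Int.fract (c - u) = ∫ u in (0 : ℝ)..1, Int.fract u := by
    rw [intervalIntegral.integral_comp_sub_left (fun x => Int.fract x) c, sub_zero]
    simpa using (Int.fract_periodic ℝ).intervalIntegral_add_eq (c - 1) 0
  have hint (c : ℝ) : IntervalIntegrable (fun u => Int.fract (c - u)) volume 0 1 := by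
    simp only [Int.fract]
    refine ((continuous_const.sub continuous_id).intervalIntegrable _ _).sub
      (Antitone.intervalIntegrable fun x y hxy => ?_)
    exact Int.cast_mono (Int.floor_mono (by linarith))
  have hsplit (u : ℝ) :
      ((⌊b - u⌋ : ℝ) - ⌊a - u⌋) = (b - a) - (Int.fract (b - u) - Int.fract (a - u)) := by
    simp only [Int.fract]; ring
  simp_rw [hsplit]
  rw [intervalIntegral.integral_sub intervalIntegrable_const ((hint b).sub (hint a)),
    intervalIntegral.integral_sub (hint b) (hint a), hfract, hfract]
  simp

/-- Systematic sampling with cumulative targets `c`: coordinate `j` is selected iff an integer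
translate of `u` falls in `(c j, c (j + 1)]`. -/
noncomputable def sysSample (c : ℕ → ℝ) (n : ℕ) (u : ℝ) : Fin n → Bool :=
  fun j => decide (⌊c j - u⌋ < ⌊c (j + 1) - u⌋)

lemma measurable_sysSample (c : ℕ → ℝ) (n : ℕ) : Measurable (sysSample c n) := by
  refine measurable_pi_lambda _ fun j => ?_
  have hfloor (m : ℕ) : Measurable fun u : ℝ => ⌊c m - u⌋ :=
    Int.measurable_floor.comp (measurable_const.sub measurable_id)
  exact (measurable_of_countable fun z : ℤ × ℤ => decide (z.1 < z.2)).comp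
    ((hfloor j).prodMk (hfloor (j + 1)))

variable {c : ℕ → ℝ} (hc : ∀ m, c m ≤ c (m + 1) ∧ c (m + 1) ≤ c m + 1)
include hc

lemma sysSample_apply_eq (n : ℕ) (u : ℝ) (j : Fin n) :
    (if sysSample c n u j then 1 else 0 : ℤ) = ⌊c (j + 1) - u⌋ - ⌊c j - u⌋ := by
  rw [floor_sub_floor_eq_ite (by linarith [hc j]) (by linarith [hc j])]
  simp [sysSample]

lemma card_sysSample {n B : ℕ} (h₀ : c 0 = 0) (hn : c n = B) (u : ℝ) :
    ∑ j, (if sysSample c n u j then 1 else 0 : ℕ) = B := by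
  have hint : ∑ j, (if sysSample c n u j then 1 else 0 : ℤ) = B := by
    simp_rw [sysSample_apply_eq hc]
    rw [Fin.sum_univ_eq_sum_range (fun m => ⌊c (m + 1) - u⌋ - ⌊c m - u⌋),
      sum_range_sub (fun m => ⌊c m - u⌋), h₀, hn, zero_sub, sub_eq_add_neg (B : ℝ),
      Int.floor_natCast_add, add_sub_cancel_right]
  exact_mod_cast hint

lemma map_sysSample_apply (n : ℕ) (j : Fin n) :
    (volume.restrict (Set.Ioc (0 : ℝ) 1)).map (sysSample c n) {A | A j = true} =
      ENNReal.ofReal (c (j + 1) - c j) := by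
  have hind (u : ℝ) : {A : Fin n → Bool | A j = true}.indicator 1 (sysSample c n u) =
      ((⌊c (j + 1) - u⌋ : ℝ) - ⌊c j - u⌋) := by
    have := congrArg (Int.cast : ℤ → ℝ) (sysSample_apply_eq hc n u j)
    push_cast at this
    rw [← this, Set.indicator_apply]
    split_ifs <;> simp_all
  rw [← ENNReal.ofReal_toReal (measure_ne_top _ _), ← measureReal_def,
    ← integral_indicator_one (Set.toFinite _).measurableSet,
    integral_map (measurable_sysSample c n).aemeasurable
      Measurable.of_discrete.aestronglyMeasurable]
  simp_rw [hind]
  rw [← intervalIntegral.integral_of_le zero_le_one, intervalIntegral_floor_sub_floor]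

end SystematicSampling

theorem exists_measure_card_eq_of_marginals {n B : ℕ} (p : Fin n → ℝ)
    (hp : ∀ j, p j ∈ Set.Icc 0 1) (hB : ∑ j, p j = B) :
    ∃ μ : Measure (Fin n → Bool), IsProbabilityMeasure μ ∧
      (∀ᵐ A ∂μ, ∑ j, (if A j then 1 else 0 : ℕ) = B) ∧
      ∀ j, μ {A | A j = true} = ENNReal.ofReal (p j) := by
  set p' : ℕ → ℝ := fun i => if h : i < n then p ⟨i, h⟩ else 0
  have hp' (i : ℕ) : p' i ∈ Set.Icc 0 1 := by
    by_cases h : i < n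
    · simpa [p', h] using hp ⟨i, h⟩
    · simp [p', h]
  set c : ℕ → ℝ := fun m => ∑ i ∈ range m, p' i
  have hc (m : ℕ) : c m ≤ c (m + 1) ∧ c (m + 1) ≤ c m + 1 := by
    simp only [c, sum_range_succ]
    constructor <;> linarith [(hp' m).1, (hp' m).2]
  have hcn : c n = B := by
    rw [← hB, show c n = ∑ i ∈ range n, p' i from rfl, ← Fin.sum_univ_eq_sum_range]
    exact sum_congr rfl fun j _ => by simp [p']
  have : IsProbabilityMeasure (volume.restrict (Set.Ioc (0 : ℝ) 1)) := ⟨by simp⟩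
  refine ⟨(volume.restrict (Set.Ioc (0 : ℝ) 1)).map (sysSample c n),
    Measure.isProbabilityMeasure_map (measurable_sysSample c n).aemeasurable, ?_, fun j => ?_⟩
  · exact (ae_map_iff (measurable_sysSample c n).aemeasurable (Set.toFinite _).measurableSet).2
      (ae_of_all _ (card_sysSample hc (sum_range_zero p') hcn))
  · rw [map_sysSample_apply hc n j]
    simp [c, sum_range_succ, p']

lemma sum_choose_succ_mul_pow (K : ℕ) (p : ℝ) :
    ∑ m ∈ range (K + 1), ((K + 1).choose (m + 1) : ℝ) * p ^ m * (1 - p) ^ (K - m) =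
      ∑ i ∈ range (K + 1), (1 - p) ^ i := by
  rcases eq_or_ne p 0 with rfl | hp
  · rw [sum_eq_single 0 (fun m _ hm => by simp [hm]) (by simp)]
    simp
  refine mul_left_cancel₀ hp ?_
  have hbinom := add_pow p (1 - p) (K + 1)
  rw [add_sub_cancel, one_pow, sum_range_succ'] at hbinom
  simp only [Nat.add_sub_add_right, pow_zero, Nat.sub_zero, Nat.choose_zero_right, Nat.cast_one,
    mul_one, one_mul] at hbinom
  have hgeom := geom_sum_mul (1 - p) (K + 1)
  rw [mul_sum]
  calc ∑ m ∈ range (K + 1), p * (((K + 1).choose (m + 1) : ℝ) * p ^ m * (1 - p) ^ (K - m))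
      = ∑ m ∈ range (K + 1), p ^ (m + 1) * (1 - p) ^ (K - m) * (K + 1).choose (m + 1) :=
        sum_congr rfl fun m _ => by ring
    _ = p * ∑ i ∈ range (K + 1), (1 - p) ^ i := by linear_combination hgeom - hbinom

lemma prod_bernoulli {K : ℕ} (p : ℝ) (s : Fin K → Bool) :
    ∏ j, (if s j then p else 1 - p) = p ^ #{j | s j} * (1 - p) ^ (K - #{j | s j}) := by
  rw [prod_ite, prod_const, prod_const, filter_not, card_sdiff_of_subset (filter_subset _ _),
    card_univ, Fintype.card_fin]

lemma sum_prod_bernoulli_mul (K : ℕ) (p : ℝ) (g : ℕ → ℝ) :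
    ∑ s : Fin K → Bool, (∏ j, if s j then p else 1 - p) * g #{j | s j} =
      ∑ m ∈ range (K + 1), (K.choose m : ℝ) * p ^ m * (1 - p) ^ (K - m) * g m := by
  simp_rw [prod_bernoulli]
  have hreindex :
      ∑ s : Fin K → Bool, p ^ #{j | s j} * (1 - p) ^ (K - #{j | s j}) * g #{j | s j} =
        ∑ t ∈ (univ : Finset (Fin K)).powerset, p ^ #t * (1 - p) ^ (K - #t) * g #t := by
    refine sum_nbij' (fun s => ({j | s j} : Finset (Fin K))) (fun t j => decide (j ∈ t))
      (by simp) (by simp) (fun s _ => by ext j; simp) (fun t _ => by ext j; simp) (fun s _ => rfl)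
  rw [hreindex, sum_powerset_apply_card (fun m => p ^ m * (1 - p) ^ (K - m) * g m), card_univ,
    Fintype.card_fin]
  exact sum_congr rfl fun m _ => by rw [nsmul_eq_mul]; ring

lemma sum_prod_bernoulli_div_card_succ (K : ℕ) (p : ℝ) :
    ∑ s : Fin K → Bool, (∏ j, if s j then p else 1 - p) * (1 / (#{j | s j} + 1 : ℝ)) =
      (∑ i ∈ range (K + 1), (1 - p) ^ i) / (K + 1) := by
  rw [sum_prod_bernoulli_mul K p (fun m => 1 / (m + 1 : ℝ)), ← sum_choose_succ_mul_pow, sum_div]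
  refine sum_congr rfl fun m _ => ?_
  have hchoose : ((K + 1 : ℕ) : ℝ) * K.choose m = (K + 1).choose (m + 1) * (m + 1 : ℕ) := by
    exact_mod_cast Nat.add_one_mul_choose_eq K m
  push_cast at hchoose
  field_simp
  linear_combination p ^ m * (1 - p) ^ (K - m) * hchoose

section Battlefield

variable {k : ℕ}

noncomputable def battlefieldPayoff (w : ℝ) (c : Fin k → Bool) (i : Fin k) : ℝ :=
  if ∀ i', c i' ≤ c i then
    w / ((Finset.univ.filter fun i' : Fin k => ∀ i'', c i'' ≤ c i').card : ℝ)
  else 0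

lemma battlefieldPayoff_of_true (w : ℝ) {c : Fin k → Bool} {i : Fin k} (hi : c i = true) :
    battlefieldPayoff w c i = w / #{i' | c i' = true} := by
  have htrue_le : ∀ b : Bool, true ≤ b ↔ b = true := by decide
  have hwin : ∀ i', (∀ i'', c i'' ≤ c i') ↔ c i' = true := fun i' =>
    ⟨fun h => (htrue_le _).1 (hi ▸ h i), fun h i'' => h ▸ Bool.le_true _⟩
  rw [battlefieldPayoff, if_pos ((hwin i).2 hi)]
  simp_rw [hwin]

lemma battlefieldPayoff_of_false (w : ℝ) {c : Fin k → Bool} {i : Fin k} (hi : c i = false) :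
    battlefieldPayoff w c i = if ∀ i', c i' = false then w / k else 0 := by
  have hle_false : ∀ b : Bool, b ≤ false ↔ b = false := by decide
  simp only [battlefieldPayoff, hi, hle_false]
  split_ifs with h
  · simp [h]
  · rfl

variable {K : ℕ}

lemma battlefieldPayoff_insertNth_true (w : ℝ) (i₀ : Fin (K + 1)) (s : Fin K → Bool) :
    battlefieldPayoff w (i₀.insertNth true s) i₀ = w / (#{j | s j} + 1) := by
  rw [battlefieldPayoff_of_true w (Fin.insertNth_apply_same _ _ _), card_filter,
    Fin.sum_univ_succAbove _ i₀, ← card_filter]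
  simp [add_comm]

lemma battlefieldPayoff_insertNth_false (w : ℝ) (i₀ : Fin (K + 1)) (s : Fin K → Bool) :
    battlefieldPayoff w (i₀.insertNth false s) i₀ =
      if s = fun _ => false then w / (K + 1) else 0 := by
  rw [battlefieldPayoff_of_false w (Fin.insertNth_apply_same _ _ _)]
  simp [Fin.forall_iff_succAbove i₀, funext_iff]

lemma sum_prod_mul_battlefieldPayoff (w p : ℝ) (r : Fin (K + 1) → ℝ) (i₀ : Fin (K + 1))
    (hr : ∀ i ≠ i₀, r i = p) :
    ∑ c : Fin (K + 1) → Bool,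
        (∏ i, if c i then r i else 1 - r i) * battlefieldPayoff w c i₀ =
      w / (K + 1) * (1 - p) ^ K + r i₀ * mMarg (K + 1) w p := by
  have hsplit (b : Bool) (s : Fin K → Bool) :
      ∏ i, (if (i₀.insertNth b s : Fin (K + 1) → Bool) i then r i else 1 - r i) =
        (if b then r i₀ else 1 - r i₀) * ∏ j, if s j then p else 1 - p := by
    rw [Fin.prod_univ_succAbove _ i₀]
    simp [hr _ (Fin.succAbove_ne i₀ _)]
  rw [← (Fin.insertNthEquiv (fun _ => Bool) i₀).sum_comp, Fintype.sum_prod_type,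
    Fintype.sum_bool]
  have hequiv (b : Bool) (s : Fin K → Bool) :
      Fin.insertNthEquiv (fun _ => Bool) i₀ (b, s) = i₀.insertNth b s := rfl
  simp only [hequiv, hsplit, battlefieldPayoff_insertNth_true, battlefieldPayoff_insertNth_false,
    mul_assoc, ← mul_sum, mul_ite, mul_zero, sum_ite_eq', mem_univ, if_true, Bool.false_eq_true,
    if_false, prod_const, card_univ, Fintype.card_fin]
  have htrue : ∑ s : Fin K → Bool, (∏ j, if s j then p else 1 - p) * (w / (#{j | s j} + 1)) =
      w * ((∑ i ∈ range (K + 1), (1 - p) ^ i) / (K + 1)) := by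
    rw [← sum_prod_bernoulli_div_card_succ, mul_sum]
    exact sum_congr rfl fun s _ => by ring
  rw [htrue, mMarg_eq_geom_sum, sum_range_succ, Nat.add_sub_cancel]
  push_cast
  ring

end Battlefield

section ExpectedPayoff

lemma integral_pi_eq_sum {ι α : Type*} [Fintype ι] [DecidableEq ι] [Fintype α]
    [MeasurableSpace α] [MeasurableSingletonClass α] (μ : ι → Measure α)
    [∀ i, IsFiniteMeasure (μ i)] (f : (ι → α) → ℝ) :
    ∫ x, f x ∂Measure.pi μ = ∑ x, (∏ i, (μ i {x i}).toReal) * f x := by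
  rw [integral_fintype Integrable.of_finite]
  refine sum_congr rfl fun x _ => ?_
  rw [measureReal_def, ← Set.univ_pi_singleton, Measure.pi_pi, ENNReal.toReal_prod, smul_eq_mul]

lemma toReal_measure_singleton_bool (β : Measure Bool) [IsProbabilityMeasure β] (b : Bool) :
    (β {b}).toReal = if b then (β {true}).toReal else 1 - (β {true}).toReal := by
  cases b
  · have hcompl : ({false} : Set Bool) = {true}ᶜ := by ext b; simp
    rw [hcompl, prob_compl_eq_one_sub (measurableSet_singleton _),
      ENNReal.toReal_sub_of_le prob_le_one ENNReal.one_ne_top]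
    simp
  · simp

variable {K k n : ℕ}

lemma boolBlottoPayoff_eq_sum (v : Fin n → ℝ) (A : Fin k → Fin n → Bool) (i : Fin k) :
    boolBlottoPayoff v A i = ∑ j, battlefieldPayoff (v j) (fun i' => A i' j) i := rfl

lemma integral_battlefieldPayoff_pi (w p : ℝ) (β : Fin (K + 1) → Measure Bool)
    [∀ i, IsProbabilityMeasure (β i)] (i₀ : Fin (K + 1))
    (hβ : ∀ i ≠ i₀, (β i {true}).toReal = p) :
    ∫ c, battlefieldPayoff w c i₀ ∂Measure.pi β =
      w / (K + 1) * (1 - p) ^ K + (β i₀ {true}).toReal * mMarg (K + 1) w p := by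
  rw [integral_pi_eq_sum]
  convert sum_prod_mul_battlefieldPayoff w p (fun i => (β i {true}).toReal) i₀ hβ using 4
  exact toReal_measure_singleton_bool _ _

lemma boolExpectedPayoff_eq_sum_integral (v : Fin n → ℝ)
    (P : Fin k → Measure (Fin n → Bool)) (hP : ∀ i, IsProbabilityMeasure (P i)) (i₀ : Fin k) :
    boolExpectedPayoff v P hP i₀ =
      ∑ j, ∫ c, battlefieldPayoff (v j) c i₀ ∂Measure.pi fun i => (P i).map (· j) := by
  simp only [boolExpectedPayoff, boolBlottoPayoff_eq_sum]
  rw [integral_finsetSum _ fun j _ => Integrable.of_finite]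
  refine sum_congr rfl fun j _ => ?_
  rw [← Measure.pi_map_pi fun i => (measurable_pi_apply j).aemeasurable,
    integral_map Measurable.of_discrete.aemeasurable Measurable.of_discrete.aestronglyMeasurable]

theorem boolExpectedPayoff_eq_of_marginals (v : Fin n → ℝ)
    (P : Fin k → Measure (Fin n → Bool)) (hP : ∀ i, IsProbabilityMeasure (P i)) (i₀ : Fin k)
    (p : Fin n → ℝ) (hp : ∀ i ≠ i₀, ∀ j, (P i {a | a j = true}).toReal = p j) :
    boolExpectedPayoff v P hP i₀ = ∑ j, (v j / k * (1 - p j) ^ (k - 1) +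
      (P i₀ {a | a j = true}).toReal * mMarg k (v j) (p j)) := by
  obtain ⟨K, rfl⟩ : ∃ K, k = K + 1 := ⟨k - 1, by have := i₀.pos; omega⟩
  rw [boolExpectedPayoff_eq_sum_integral]
  refine sum_congr rfl fun j _ => ?_
  have hmap (i : Fin (K + 1)) : (P i).map (· j) {true} = P i {a | a j = true} :=
    Measure.map_apply (measurable_pi_apply j) (measurableSet_singleton true)
  have : ∀ i, IsProbabilityMeasure ((P i).map (· j)) := fun i =>
    Measure.isProbabilityMeasure_map (measurable_pi_apply j).aemeasurable
  rw [integral_battlefieldPayoff_pi (v j) (p j) _ i₀ fun i hi => by rw [hmap, hp i hi j], hmap]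
  push_cast
  rfl

lemma sum_toReal_marginal_le {n B : ℕ} (ν : Measure (Fin n → Bool)) [IsProbabilityMeasure ν]
    (hB : ∀ᵐ A ∂ν, ∑ j, (if A j then 1 else 0 : ℕ) ≤ B) :
    ∑ j, (ν {A | A j = true}).toReal ≤ B := by
  have hmarg (j : Fin n) :
      (ν {A | A j = true}).toReal = ∫ A, (if A j then 1 else 0 : ℝ) ∂ν := by
    rw [← measureReal_def, ← integral_indicator_one (Set.toFinite _).measurableSet]
    congr 1 with A
    simp [Set.indicator_apply]
  simp_rw [hmarg]
  rw [← integral_finsetSum _ fun _ _ => Integrable.of_finite]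
  calc ∫ A, ∑ j, (if A j then 1 else 0 : ℝ) ∂ν ≤ ∫ _, (B : ℝ) ∂ν :=
        integral_mono_ae Integrable.of_finite (integrable_const _)
          (hB.mono fun A hA => by dsimp only; exact_mod_cast hA)
    _ = B := by simp

end ExpectedPayoff

end BooleanBlotto

open BooleanBlotto Finset

theorem stmt17_general (k n : ℕ) (hk : 3 ≤ k) (B : ℕ) (hB : B ≤ n)
    (v : Fin n → ℝ) (hv : ∀ j, 0 < v j)
    -- `minv j` is the extended inverse `m_{v_j}^{-1} : ℝ → [0,1]`:
    (minv : Fin n → ℝ → ℝ)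
    (hminv_inv : ∀ j, ∀ p ∈ Set.Icc (0 : ℝ) 1, minv j (mMarg k (v j) p) = p)
    (hminv_lo : ∀ j, ∀ x : ℝ, x < v j / k → minv j x = 1)
    (hminv_hi : ∀ j, ∀ x : ℝ, ((k : ℝ) - 1) * v j / k < x → minv j x = 0)
    -- `x* = inf {x : Σ_j m_{v_j}^{-1}(x) ≤ B}` and `p*_j = m_{v_j}^{-1}(x*)`:
    (xstar : ℝ) (hxstar : xstar = sInf {x : ℝ | ∑ j, minv j x ≤ (B : ℝ)})
    (pstar : Fin n → ℝ) (hpstar : ∀ j, pstar j = minv j xstar) :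
    ∃ (μ : Measure (Fin n → Bool)) (hμ : IsProbabilityMeasure μ),
      (∀ᵐ A ∂μ, ∑ j, (if A j then (1 : ℕ) else 0) = B) ∧
      (∀ j, μ {A : Fin n → Bool | A j = true} = ENNReal.ofReal (pstar j)) ∧
      (∀ i₀ : Fin k, ∀ (ν : Measure (Fin n → Bool)) (hν : IsProbabilityMeasure ν),
        (∀ᵐ A ∂ν, ∑ j, (if A j then (1 : ℕ) else 0) ≤ B) →
        boolExpectedPayoff v (devFamily i₀ μ ν) (devFamily_prob i₀ μ ν hμ hν) i₀ ≤
          boolExpectedPayoff v (fun _ => μ) (fun _ => hμ) i₀) := by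
  have hk2 : 2 ≤ k := by omega
  have hf : ∀ j, IsExtendedInverse k (v j) (minv j) := fun j =>
    ⟨hminv_inv j, hminv_lo j, hminv_hi j⟩
  obtain rfl : pstar = fun j => minv j xstar := funext hpstar
  obtain ⟨hx0, hsum⟩ := hxstar ▸ sInf_nonneg_and_sum_extendedInverse_eq hk2 hv hf hB
  have hp : ∀ j, minv j xstar ∈ Set.Icc 0 1 := fun j => (hf j).mem_Icc hk2 xstar
  obtain ⟨μ, hμ, hcard, hmarg⟩ := exists_measure_card_eq_of_marginals _ hp hsum
  have hmarg' (j : Fin n) : (μ {A | A j = true}).toReal = minv j xstar := by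
    rw [hmarg, ENNReal.toReal_ofReal (hp j).1]
  refine ⟨μ, hμ, hcard, hmarg, fun i₀ ν hν hbudget => ?_⟩
  rw [boolExpectedPayoff_eq_of_marginals _ _ _ i₀ (fun j => minv j xstar)
      fun i hi j => by simp [devFamily, hi, hmarg'],
    boolExpectedPayoff_eq_of_marginals _ _ _ i₀ _ fun _ _ => hmarg', sum_add_distrib,
    sum_add_distrib]
  simp only [devFamily, if_true, hmarg']
  have hq (j : Fin n) : (ν {A | A j = true}).toReal ∈ Set.Icc 0 1 :=
    ⟨ENNReal.toReal_nonneg, measureReal_le_one⟩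
  exact add_le_add_right
    (sum_mul_mMarg_le_of_sum_le hk2 hf hx0 hsum hq (sum_toReal_marginal_le ν hbudget)) _

theorem stmt17 (k n : ℕ) (hk : 3 ≤ k) (B : ℕ) (hB : B ≤ n)
    (v : Fin n → ℝ) (hv : ∀ j, 0 < v j)
    (hsorted : ∀ i j : Fin n, i ≤ j → v j ≤ v i)
    -- `minv j` is the extended inverse `m_{v_j}^{-1} : ℝ → [0,1]`:
    (minv : Fin n → ℝ → ℝ)
    (hminv_inv : ∀ j, ∀ p ∈ Set.Icc (0 : ℝ) 1, minv j (mMarg k (v j) p) = p)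
    (hminv_lo : ∀ j, ∀ x : ℝ, x < v j / k → minv j x = 1)
    (hminv_hi : ∀ j, ∀ x : ℝ, ((k : ℝ) - 1) * v j / k < x → minv j x = 0)
    -- `x* = inf {x : Σ_j m_{v_j}^{-1}(x) ≤ B}` and `p*_j = m_{v_j}^{-1}(x*)`:
    (xstar : ℝ) (hxstar : xstar = sInf {x : ℝ | ∑ j, minv j x ≤ (B : ℝ)})
    (pstar : Fin n → ℝ) (hpstar : ∀ j, pstar j = minv j xstar) :
    ∃ (μ : Measure (Fin n → Bool)) (hμ : IsProbabilityMeasure μ),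
      (∀ᵐ A ∂μ, ∑ j, (if A j then (1 : ℕ) else 0) = B) ∧
      (∀ j, μ {A : Fin n → Bool | A j = true} = ENNReal.ofReal (pstar j)) ∧
      (∀ i₀ : Fin k, ∀ (ν : Measure (Fin n → Bool)) (hν : IsProbabilityMeasure ν),
        (∀ᵐ A ∂ν, ∑ j, (if A j then (1 : ℕ) else 0) ≤ B) →
        boolExpectedPayoff v (devFamily i₀ μ ν) (devFamily_prob i₀ μ ν hμ hν) i₀ ≤
          boolExpectedPayoff v (fun _ => μ) (fun _ => hμ) i₀) :=
  stmt17_general k n hk B hB v hv minv hminv_inv hminv_lo hminv_hi xstar hxstar pstar hpstar
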